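/- arXiv:quant-ph/0412133 — 2 statements merged into one kernel-verified Lean document; each statement's English description precedes it below -/
import Mathlib

section
/- Let T(ρ) = (1_d − m·M(ρ))/(d−m) where M is a positive linear trace-preserving map and there exists ρ₀ with m·M(ρ₀) an orthogonal projection of rank m. Then the maximal output operator norm sup_ρ ‖T(ρ)‖_∞ is attained at an output state which is a normalized projection, and equals 1/(d−m). -/
/-!
Positivity of `M` gives `m • M ρ ≥ 0`, i.e. `T ρ ≤ (d - m)⁻¹ • 1` in the Loewner order, which bounds
every eigenvalue of `T ρ`. At `ρ₀` the matrix `P = m • M ρ₀` is a projection of trace `m`, so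
`T ρ₀ = (d - m)⁻¹ • Q` with `Q = 1 - P` a nonzero projection of trace, hence rank, `d - m`; the
eigenvalues of `T ρ₀` lie in `{0, (d - m)⁻¹}` and are not all zero.
-/

open Matrix BigOperators
open scoped ComplexOrder

noncomputable section

variable {n : Type*} [Fintype n] [DecidableEq n]

/-- A density matrix: positive semidefinite with unit trace. -/
def IsDensity (ρ : Matrix n n ℂ) : Prop := ρ.PosSemidef ∧ ρ.trace = 1

/-- `tr(ρ^α)` via functional calculus (powers of eigenvalues, with `0^α := 0`). -/
noncomputable def trPow (ρ : Matrix n n ℂ) (α : ℝ) : ℝ :=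
  if h : ρ.IsHermitian then ∑ i, if h.eigenvalues i = 0 then 0 else (h.eigenvalues i) ^ α else 0

/-- The von Neumann entropy `-tr(ρ log ρ)` (base-2 logarithm). -/
noncomputable def vN (ρ : Matrix n n ℂ) : ℝ :=
  if h : ρ.IsHermitian then -∑ i, (h.eigenvalues i) * Real.logb 2 (h.eigenvalues i) else 0

/-- The Renyi α-entropy, with the von Neumann entropy at α = 1. -/
noncomputable def renyi (ρ : Matrix n n ℂ) (α : ℝ) : ℝ :=
  if α = 1 then vN ρ else (1 - α)⁻¹ * Real.logb 2 (trPow ρ α)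

/-- Largest eigenvalue (operator norm for positive semidefinite matrices). -/
noncomputable def maxEig (A : Matrix n n ℂ) : ℝ :=
  if h : A.IsHermitian then ⨆ i, h.eigenvalues i else 0

/-- An orthogonal projection. -/
def IsProjection (P : Matrix n n ℂ) : Prop := P.IsHermitian ∧ P * P = P

/-- A normalized projection `P / rank P`. -/
def IsNormalizedProjection (ρ : Matrix n n ℂ) : Prop :=
  ∃ P : Matrix n n ℂ, IsProjection P ∧ ρ = ((P.rank : ℂ))⁻¹ • P

def TracePreserving (T : Matrix n n ℂ → Matrix n n ℂ) : Prop :=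
  ∀ X, (T X).trace = X.trace

def PositiveMap (T : Matrix n n ℂ → Matrix n n ℂ) : Prop :=
  ∀ X, X.PosSemidef → (T X).PosSemidef

/-- The ampliation `T ⊗ id` acting blockwise. -/
def ampl (T : Matrix n n ℂ → Matrix n n ℂ) {k : Type*} [Fintype k] [DecidableEq k]
    (X : Matrix (n × k) (n × k) ℂ) : Matrix (n × k) (n × k) ℂ :=
  fun p q => T (fun a b => X (a, p.2) (b, q.2)) p.1 q.1

def CompletelyPositive (T : Matrix n n ℂ → Matrix n n ℂ) : Prop :=
  ∀ (N : ℕ) (X : Matrix (n × Fin N) (n × Fin N) ℂ), X.PosSemidef → (ampl T X).PosSemidef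

def IsChannel (T : Matrix n n ℂ → Matrix n n ℂ) : Prop :=
  IsLinearMap ℂ T ∧ CompletelyPositive T ∧ TracePreserving T

/-- Minimal output Renyi α-entropy. -/
noncomputable def minOut (T : Matrix n n ℂ → Matrix n n ℂ) (α : ℝ) : ℝ :=
  sInf {x | ∃ ρ, IsDensity ρ ∧ x = renyi (T ρ) α}

/-- Maximal output von Neumann entropy. -/
noncomputable def maxVN (T : Matrix n n ℂ → Matrix n n ℂ) : ℝ :=
  sSup {x | ∃ ρ, IsDensity ρ ∧ x = vN (T ρ)}

/-- Holevo capacity. -/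
noncomputable def holevoCap (T : Matrix n n ℂ → Matrix n n ℂ) : ℝ :=
  sSup {x | ∃ (k : ℕ) (p : Fin k → ℝ) (σ : Fin k → Matrix n n ℂ),
    (∀ i, 0 ≤ p i) ∧ (∑ i, p i = 1) ∧ (∀ i, IsDensity (σ i)) ∧
    x = vN (T (∑ i, (p i : ℂ) • σ i)) - ∑ i, p i * vN (T (σ i))}

/-- Tensor product of matrices indexed by a finite family. -/
def tensorMatrix {N : ℕ} {d : Fin N → Type*} [∀ i, Fintype (d i)] [∀ i, DecidableEq (d i)]
    (A : ∀ i, Matrix (d i) (d i) ℂ) : Matrix (∀ i, d i) (∀ i, d i) ℂ :=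
  fun p q => ∏ i, A i (p i) (q i)

/-- The flip (swap) operator on `ℂ^n ⊗ ℂ^n`. -/
def flipMat : Matrix (n × n) (n × n) ℂ :=
  fun p q => if p.1 = q.2 ∧ p.2 = q.1 then 1 else 0

/-- Partial transpose on the second tensor factor. -/
def pt2 {a b : Type*} (X : Matrix (a × b) (a × b) ℂ) : Matrix (a × b) (a × b) ℂ :=
  fun p q => X (p.1, q.2) (q.1, p.2)

end

namespace Matrix

variable {n 𝕜 : Type*} [Fintype n] [DecidableEq n] [RCLike 𝕜]

lemma IsHermitian.eigenvalues_le_of_posSemidef_sub {A : Matrix n n 𝕜} (hA : A.IsHermitian)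
    {c : ℝ} (h : ((c : 𝕜) • 1 - A).PosSemidef) (i : n) : hA.eigenvalues i ≤ c := by
  set v := ⇑(hA.eigenvectorBasis i)
  have hv : star v ⬝ᵥ v = 1 := by
    rw [dotProduct_comm, ← EuclideanSpace.inner_eq_star_dotProduct, inner_self_eq_norm_sq_to_K,
      hA.eigenvectorBasis.orthonormal.1 i]
    norm_num
  have := h.re_dotProduct_nonneg v
  rw [sub_mulVec, smul_mulVec, one_mulVec, dotProduct_sub, dotProduct_smul, hv, map_sub,
    ← hA.eigenvalues_eq] at this
  simpa [sub_nonneg] using this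

lemma IsHermitian.eigenvalues_eq_zero_or_eq_of_mul_self_eq_smul {A : Matrix n n 𝕜}
    (hA : A.IsHermitian) {c : ℝ} (hAA : A * A = (c : 𝕜) • A) (i : n) :
    hA.eigenvalues i = 0 ∨ hA.eigenvalues i = c := by
  set v := ⇑(hA.eigenvectorBasis i)
  have hv : v ≠ 0 := (WithLp.ofLp_eq_zero 2).ne.2 <| hA.eigenvectorBasis.orthonormal.ne_zero i
  have heig : (hA.eigenvalues i * hA.eigenvalues i) • v = (c * hA.eigenvalues i) • v := by
    have := congrArg (· *ᵥ v) hAA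
    rw [← mulVec_mulVec, smul_mulVec, hA.mulVec_eigenvectorBasis, mulVec_smul,
      hA.mulVec_eigenvectorBasis] at this
    rw [mul_smul, mul_smul]
    rwa [algebraMap_smul 𝕜 c] at this
  exact (mul_eq_mul_right_iff.mp (smul_left_injective ℝ hv heig)).symm

lemma rank_eq_trace_of_isIdempotentElem {K : Type*} [Field K] {P : Matrix n n K}
    (hP : IsIdempotentElem P) : (P.rank : K) = P.trace := by
  have hP' : IsIdempotentElem (toLin' P) := hP.map toLinAlgEquiv'
  rw [← trace_toLin'_eq, (LinearMap.IsIdempotentElem.isProj_range _ hP').trace, rank]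
  rfl

end Matrix

section MaxEig

variable {n : Type*} [Fintype n] [DecidableEq n]

lemma le_maxEig {A : Matrix n n ℂ} (hA : A.IsHermitian) (i : n) : hA.eigenvalues i ≤ maxEig A := by
  rw [maxEig, dif_pos hA]
  exact le_ciSup (Set.finite_range _).bddAbove i

lemma maxEig_le [Nonempty n] {A : Matrix n n ℂ} (hA : A.IsHermitian) {c : ℝ}
    (h : ∀ i, hA.eigenvalues i ≤ c) : maxEig A ≤ c := by
  rw [maxEig, dif_pos hA]
  exact ciSup_le h

lemma maxEig_le_of_posSemidef_sub [Nonempty n] {A : Matrix n n ℂ} (hA : A.IsHermitian) {c : ℝ}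
    (h : ((c : ℂ) • 1 - A).PosSemidef) : maxEig A ≤ c :=
  maxEig_le hA (hA.eigenvalues_le_of_posSemidef_sub h)

lemma IsProjection.one_sub {P : Matrix n n ℂ} (hP : IsProjection P) : IsProjection (1 - P) :=
  ⟨isHermitian_one.sub hP.1, (IsIdempotentElem.one_sub hP.2 :)⟩

lemma maxEig_smul_of_isProjection {P : Matrix n n ℂ} (hP : IsProjection P) (hP0 : P ≠ 0) {c : ℝ}
    (hc : 0 ≤ c) : maxEig ((c : ℂ) • P) = c := by
  have hA : ((c : ℂ) • P).IsHermitian := hP.1.smul (Complex.conj_ofReal c)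
  have hAA : (c : ℂ) • P * ((c : ℂ) • P) = (c : ℂ) • ((c : ℂ) • P) := by
    rw [smul_mul_smul_comm, hP.2, smul_smul]
  have heig := hA.eigenvalues_eq_zero_or_eq_of_mul_self_eq_smul hAA
  obtain ⟨i, hi⟩ : ∃ i, hA.eigenvalues i = c := by
    by_contra! hne
    have hzero : hA.eigenvalues = 0 := funext fun i => (heig i).resolve_right (hne i)
    obtain rfl : c = 0 := by
      simpa [hP0] using hA.eigenvalues_eq_zero_iff.mp hzero
    obtain ⟨i⟩ : Nonempty n := by
      by_contra! hempty
      exact hP0 (Subsingleton.elim _ _)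
    exact hne i (congrFun hzero i)
  have : Nonempty n := ⟨i⟩
  refine le_antisymm (maxEig_le hA fun j => ?_) (hi.ge.trans (le_maxEig hA i))
  rcases heig j with h | h <;> rw [h]
  exact hc

end MaxEig

theorem maxOutputNorm_attained_at_projection_general {d m : ℕ} (hmd : m < d)
    (M : Matrix (Fin d) (Fin d) ℂ → Matrix (Fin d) (Fin d) ℂ)
    (hTP : TracePreserving M) (hpos : PositiveMap M)
    (hproj : ∃ ρ₀, IsDensity ρ₀ ∧ IsProjection ((m : ℂ) • M ρ₀) ∧ ((m : ℂ) • M ρ₀).rank = m)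
    (T : Matrix (Fin d) (Fin d) ℂ → Matrix (Fin d) (Fin d) ℂ)
    (hTdef : ∀ ρ, T ρ = ((d : ℂ) - (m : ℂ))⁻¹ • (1 - (m : ℂ) • M ρ)) :
    (∀ ρ, IsDensity ρ → maxEig (T ρ) ≤ ((d : ℝ) - (m : ℝ))⁻¹) ∧
    (∃ ρ, IsDensity ρ ∧ IsNormalizedProjection (T ρ) ∧
      maxEig (T ρ) = ((d : ℝ) - (m : ℝ))⁻¹) := by
  have : Nonempty (Fin d) := ⟨⟨0, by omega⟩⟩
  set e : ℝ := ((d : ℝ) - m)⁻¹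
  have he : 0 < e := inv_pos.2 (sub_pos.2 (by exact_mod_cast hmd))
  have hT : ∀ ρ, T ρ = (e : ℂ) • (1 - (m : ℂ) • M ρ) := fun ρ => by rw [hTdef]; push_cast [e]; rfl
  refine ⟨fun ρ hρ => ?_, ?_⟩
  · have hmM : ((m : ℂ) • M ρ).PosSemidef := (hpos ρ hρ.1).smul (by positivity)
    refine maxEig_le_of_posSemidef_sub
      (hT ρ ▸ (isHermitian_one.sub hmM.1).smul (Complex.conj_ofReal e)) ?_
    rw [hT, ← smul_sub, sub_sub_cancel]
    exact hmM.smul (by exact_mod_cast he.le)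
  · obtain ⟨ρ₀, hρ₀, hP, -⟩ := hproj
    set Q := 1 - (m : ℂ) • M ρ₀
    have hQ : IsProjection Q := hP.one_sub
    have htrQ : Q.trace = ((d - m : ℝ) : ℂ) := by
      simp [Q, trace_sub, hTP ρ₀, hρ₀.2]
    have hQ0 : Q ≠ 0 := by
      rintro hQ0
      rw [hQ0, trace_zero, eq_comm, Complex.ofReal_eq_zero] at htrQ
      exact he.ne' (by simp [e, htrQ])
    have hrank : ((Q.rank : ℂ))⁻¹ = e := by
      rw [rank_eq_trace_of_isIdempotentElem hQ.2, htrQ, Complex.ofReal_inv]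
    exact ⟨ρ₀, hρ₀, ⟨Q, hQ, by rw [hT, hrank]⟩, by rw [hT, maxEig_smul_of_isProjection hQ hQ0 he.le]⟩

/-- for `T(ρ) = (1 - m M(ρ))/(d-m)` the maximal output operator norm is
attained at a normalized projection and equals `1/(d-m)`. -/
theorem maxOutputNorm_attained_at_projection {d m : ℕ} (hm : 1 ≤ m) (hmd : m < d)
    (M : Matrix (Fin d) (Fin d) ℂ → Matrix (Fin d) (Fin d) ℂ)
    (hlin : IsLinearMap ℂ M) (hTP : TracePreserving M) (hpos : PositiveMap M)
    (hproj : ∃ ρ₀, IsDensity ρ₀ ∧ IsProjection ((m : ℂ) • M ρ₀) ∧ ((m : ℂ) • M ρ₀).rank = m)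
    (T : Matrix (Fin d) (Fin d) ℂ → Matrix (Fin d) (Fin d) ℂ)
    (hTdef : ∀ ρ, T ρ = ((d : ℂ) - (m : ℂ))⁻¹ • (1 - (m : ℂ) • M ρ)) :
    (∀ ρ, IsDensity ρ → maxEig (T ρ) ≤ ((d : ℝ) - (m : ℝ))⁻¹) ∧
    (∃ ρ, IsDensity ρ ∧ IsNormalizedProjection (T ρ) ∧
      maxEig (T ρ) = ((d : ℝ) - (m : ℝ))⁻¹) :=
  maxOutputNorm_attained_at_projection_general hmd M hTP hpos hproj T hTdef
end

section
/- Let T be a quantum channel whose minimal output von Neumann entropy ν₁(T) is achieved on a set of input states {ρ_i}, and suppose there exists a probability distribution {p_i} such that S(T(Σ_i p_i ρ_i)) = sup_ρ S(T(ρ)). Then the Holevo capacity satisfies C(T) = sup_ρ S(T(ρ)) − ν₁(T). -/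
open Matrix BigOperators
open scoped ComplexOrder

/-! Every ensemble has χ = S(T ρ̄) − Σ pᵢ S(T σᵢ) ≤ sup S(T ρ) − ν₁(T), term by term; the
hypotheses exhibit one ensemble for which both terms are extremal, so it attains the bound. -/

lemma isDensity_sum_smul {n ι : Type*} [Fintype n] [Fintype ι] {p : ι → ℝ}
    {σ : ι → Matrix n n ℂ}
    (hp0 : ∀ i, 0 ≤ p i) (hp1 : ∑ i, p i = 1) (hσ : ∀ i, IsDensity (σ i)) :
    IsDensity (∑ i, (p i : ℂ) • σ i) := by
  refine ⟨posSemidef_sum _ fun i _ => (hσ i).1.smul (Complex.zero_le_real.2 (hp0 i)), ?_⟩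
  simp only [trace_sum, trace_smul, fun i => (hσ i).2, smul_eq_mul, mul_one]
  exact_mod_cast hp1

section Entropy

variable {n : Type*} [Fintype n] [DecidableEq n]

@[simp]
lemma renyi_one (ρ : Matrix n n ℂ) : renyi ρ 1 = vN ρ := if_pos rfl

lemma vN_eq_sum_negMulLog {A : Matrix n n ℂ} (hA : A.IsHermitian) :
    vN A = (∑ i, Real.negMulLog (hA.eigenvalues i)) / Real.log 2 := by
  simp only [vN, dif_pos hA, Real.logb, Real.negMulLog, Finset.sum_div]
  rw [← Finset.sum_neg_distrib]
  exact Finset.sum_congr rfl fun i _ => by ring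

lemma vN_le_card_div_log_two {A : Matrix n n ℂ} (hA : A.PosSemidef) :
    vN A ≤ Fintype.card n / Real.log 2 := by
  rw [vN_eq_sum_negMulLog hA.1]
  gcongr
  calc ∑ i, Real.negMulLog (hA.1.eigenvalues i)
      ≤ ∑ _i : n, (1 : ℝ) := Finset.sum_le_sum fun i _ =>
        (Real.negMulLog_le_one_sub_self (hA.eigenvalues_nonneg i)).trans
          (by linarith [hA.eigenvalues_nonneg i])
    _ = Fintype.card n := by simp

lemma IsDensity.sum_eigenvalues {ρ : Matrix n n ℂ} (hρ : IsDensity ρ) :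
    ∑ i, hρ.1.1.eigenvalues i = 1 := by
  have h := hρ.1.1.trace_eq_sum_eigenvalues.symm.trans hρ.2
  simp only [RCLike.ofReal_eq_complex_ofReal] at h
  exact_mod_cast h

lemma IsDensity.eigenvalues_le_one {ρ : Matrix n n ℂ} (hρ : IsDensity ρ) (i : n) :
    hρ.1.1.eigenvalues i ≤ 1 :=
  hρ.sum_eigenvalues ▸ Finset.single_le_sum (fun j _ => hρ.1.eigenvalues_nonneg j)
    (Finset.mem_univ i)

lemma IsDensity.vN_nonneg {ρ : Matrix n n ℂ} (hρ : IsDensity ρ) : 0 ≤ vN ρ := by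
  rw [vN_eq_sum_negMulLog hρ.1.1]
  exact div_nonneg (Finset.sum_nonneg fun i _ =>
    Real.negMulLog_nonneg (hρ.1.eigenvalues_nonneg i) (hρ.eigenvalues_le_one i))
    (Real.log_nonneg one_le_two)

end Entropy

/-- Positivity is complete positivity with a one-dimensional ancilla. -/
lemma CompletelyPositive.positiveMap {n : Type*} {T : Matrix n n ℂ → Matrix n n ℂ}
    (hT : CompletelyPositive T) : PositiveMap T := fun _ hX =>
  (hT 1 _ (hX.submatrix (Prod.fst : n × Fin 1 → n))).submatrix fun a => (a, 0)

lemma IsChannel.isDensity_apply {n : Type*} [Fintype n] {T : Matrix n n ℂ → Matrix n n ℂ}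
    (hT : IsChannel T) {ρ : Matrix n n ℂ} (hρ : IsDensity ρ) :
    IsDensity (T ρ) :=
  ⟨hT.2.1.positiveMap ρ hρ.1, (hT.2.2 ρ).trans hρ.2⟩

section Channel

variable {n : Type*} [Fintype n] [DecidableEq n] {T : Matrix n n ℂ → Matrix n n ℂ}

lemma minOut_one_le (hT : IsChannel T) {ρ : Matrix n n ℂ} (hρ : IsDensity ρ) :
    minOut T 1 ≤ vN (T ρ) :=
  csInf_le ⟨0, by rintro _ ⟨σ, hσ, rfl⟩; simpa using (hT.isDensity_apply hσ).vN_nonneg⟩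
    ⟨ρ, hρ, (renyi_one _).symm⟩

lemma le_maxVN (hT : IsChannel T) {ρ : Matrix n n ℂ} (hρ : IsDensity ρ) :
    vN (T ρ) ≤ maxVN T :=
  le_csSup ⟨_, by rintro _ ⟨σ, hσ, rfl⟩; exact vN_le_card_div_log_two (hT.isDensity_apply hσ).1⟩
    ⟨ρ, hρ, rfl⟩

/-- When there is no density matrix at all (`n` empty), both sides are the junk value `0`. -/
lemma minOut_one_le_maxVN (hT : IsChannel T) : minOut T 1 ≤ maxVN T := by
  by_cases h : ∃ ρ : Matrix n n ℂ, IsDensity ρ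
  · obtain ⟨ρ, hρ⟩ := h
    exact (minOut_one_le hT hρ).trans (le_maxVN hT hρ)
  · push Not at h
    simp [minOut, maxVN, h]

end Channel

section Holevo

variable {n : Type*} [Fintype n] [DecidableEq n] {T : Matrix n n ℂ → Matrix n n ℂ}
  {ι : Type*} [Fintype ι] {p : ι → ℝ} {σ : ι → Matrix n n ℂ}

noncomputable def holevoChi (T : Matrix n n ℂ → Matrix n n ℂ) (p : ι → ℝ)
    (σ : ι → Matrix n n ℂ) : ℝ :=
  vN (T (∑ i, (p i : ℂ) • σ i)) - ∑ i, p i * vN (T (σ i))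

lemma holevoChi_comp_equiv {κ : Type*} [Fintype κ] (e : κ ≃ ι) :
    holevoChi T (p ∘ e) (σ ∘ e) = holevoChi T p σ := by
  simp only [holevoChi, Function.comp_apply, e.sum_comp (fun i => (p i : ℂ) • σ i),
    e.sum_comp (fun i => p i * vN (T (σ i)))]

lemma holevoChi_le_maxVN_sub_minOut (hT : IsChannel T) (hp0 : ∀ i, 0 ≤ p i)
    (hp1 : ∑ i, p i = 1) (hσ : ∀ i, IsDensity (σ i)) :
    holevoChi T p σ ≤ maxVN T - minOut T 1 := by
  have hmix := le_maxVN hT (isDensity_sum_smul hp0 hp1 hσ)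
  have havg : minOut T 1 ≤ ∑ i, p i * vN (T (σ i)) :=
    calc minOut T 1 = ∑ i, p i * minOut T 1 := by rw [← Finset.sum_mul, hp1, one_mul]
      _ ≤ ∑ i, p i * vN (T (σ i)) := Finset.sum_le_sum fun i _ =>
        mul_le_mul_of_nonneg_left (minOut_one_le hT (hσ i)) (hp0 i)
  unfold holevoChi
  linarith

lemma holevoCap_le_maxVN_sub_minOut (hT : IsChannel T) :
    holevoCap T ≤ maxVN T - minOut T 1 :=
  Real.sSup_le (by
    rintro _ ⟨k, p, σ, hp0, hp1, hσ, rfl⟩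
    exact holevoChi_le_maxVN_sub_minOut hT hp0 hp1 hσ)
    (sub_nonneg.2 (minOut_one_le_maxVN hT))

lemma holevoChi_le_holevoCap (hT : IsChannel T) (hp0 : ∀ i, 0 ≤ p i)
    (hp1 : ∑ i, p i = 1) (hσ : ∀ i, IsDensity (σ i)) :
    holevoChi T p σ ≤ holevoCap T := by
  classical
  obtain ⟨e⟩ := Fintype.truncEquivFin ι
  refine le_csSup ⟨maxVN T - minOut T 1, ?_⟩ ⟨_, p ∘ e.symm, σ ∘ e.symm,
    fun i => hp0 _, by rwa [← e.symm.sum_comp] at hp1, fun i => hσ _,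
    (holevoChi_comp_equiv e.symm).symm⟩
  rintro _ ⟨k, q, τ, hq0, hq1, hτ, rfl⟩
  exact holevoChi_le_maxVN_sub_minOut hT hq0 hq1 hτ

end Holevo

theorem holevoCap_eq_max_sub_min_general {n : Type*} [Fintype n] [DecidableEq n]
    (T : Matrix n n ℂ → Matrix n n ℂ) (hT : IsChannel T)
    {ι : Type} [Fintype ι]
    (ρ : ι → Matrix n n ℂ) (hρ : ∀ i, IsDensity (ρ i))
    (hmin : ∀ i, vN (T (ρ i)) = minOut T 1)
    (p : ι → ℝ) (hp0 : ∀ i, 0 ≤ p i) (hp1 : ∑ i, p i = 1)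
    (hmax : vN (T (∑ i, (p i : ℂ) • ρ i)) = maxVN T) :
    holevoCap T = maxVN T - minOut T 1 := by
  have hχ : holevoChi T p ρ = maxVN T - minOut T 1 := by
    simp only [holevoChi, hmax, hmin, ← Finset.sum_mul, hp1, one_mul]
  exact (holevoCap_le_maxVN_sub_minOut hT).antisymm (hχ ▸ holevoChi_le_holevoCap hT hp0 hp1 hρ)

/-- if the minimal output entropy is achieved on states whose convex
combination has maximal-entropy output, then `C(T) = sup S(T(ρ)) - ν₁(T)`. -/
theorem holevoCap_eq_max_sub_min {n : Type*} [Fintype n] [DecidableEq n]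
    (T : Matrix n n ℂ → Matrix n n ℂ) (hT : IsChannel T)
    {ι : Type} [Fintype ι] [Nonempty ι]
    (ρ : ι → Matrix n n ℂ) (hρ : ∀ i, IsDensity (ρ i))
    (hmin : ∀ i, vN (T (ρ i)) = minOut T 1)
    (p : ι → ℝ) (hp0 : ∀ i, 0 ≤ p i) (hp1 : ∑ i, p i = 1)
    (hmax : vN (T (∑ i, (p i : ℂ) • ρ i)) = maxVN T) :
    holevoCap T = maxVN T - minOut T 1 :=
  holevoCap_eq_max_sub_min_general T hT ρ hρ hmin p hp0 hp1 hmax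
end
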